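/- Let ζ ∼ Unif[−τ,τ] with τ > 0, β > 0, and let m_{ζ,β} = E_{ν_{ζ,β}}[ζ] be the mean under the tilt e^{ζ/β}. Then E_{ν_{ζ,β/2}}[(ζ − m_{ζ,β})²] = β²/2 − β·τ·csch(2τ/β), where ν_{ζ,s} denotes the e^{ζ/s}-tilted uniform law on [−τ,τ]. -/

import Mathlib

open intervalIntegral Real

lemma int_exp (c a b : ℝ) (hc : c ≠ 0) :
    ∫ z in a..b, Real.exp (z * c) = (Real.exp (b * c) - Real.exp (a * c)) / c := by
  have key : ∀ z : ℝ, HasDerivAt (fun z => Real.exp (z * c) / c) (Real.exp (z * c)) z := by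
    intro z
    have := ((Real.hasDerivAt_exp (z*c)).comp z ((hasDerivAt_id z).mul_const c))
    simpa [mul_comm, mul_assoc, mul_div_cancel_left₀ _ hc] using this.div_const c
  rw [intervalIntegral.integral_eq_sub_of_hasDerivAt (fun z _ => key z)
    ((Real.continuous_exp.comp (continuous_id.mul continuous_const)).intervalIntegrable a b)]
  ring

lemma int_xexp (c a b : ℝ) (hc : c ≠ 0) :
    ∫ z in a..b, z * Real.exp (z * c)
      = (b / c - 1 / c ^ 2) * Real.exp (b * c) - (a / c - 1 / c ^ 2) * Real.exp (a * c) := by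
  have key : ∀ z : ℝ, HasDerivAt (fun z => (z / c - 1 / c ^ 2) * Real.exp (z * c))
      (z * Real.exp (z * c)) z := by
    intro z
    have he : HasDerivAt (fun z : ℝ => Real.exp (z * c)) (c * Real.exp (z * c)) z := by
      have := ((Real.hasDerivAt_exp (z*c)).comp z ((hasDerivAt_id z).mul_const c))
      simpa [mul_comm, Function.comp_def] using this
    have hp : HasDerivAt (fun z : ℝ => z / c - 1 / c ^ 2) (1 / c) z := by
      exact ((hasDerivAt_id z).div_const c).sub_const (1 / c ^ 2)
    have : HasDerivAt (fun z => (z / c - 1 / c ^ 2) * Real.exp (z * c)) _ z := hp.mul he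
    convert this using 1
    field_simp
    ring
  rw [intervalIntegral.integral_eq_sub_of_hasDerivAt (fun z _ => key z)
    ((continuous_id.mul (Real.continuous_exp.comp (continuous_id.mul continuous_const))).intervalIntegrable a b)]

lemma int_sqexp (c m a b : ℝ) (hc : c ≠ 0) :
    ∫ z in a..b, (z - m) ^ 2 * Real.exp (z * c)
      = ((b - m) ^ 2 / c - 2 * (b - m) / c ^ 2 + 2 / c ^ 3) * Real.exp (b * c)
        - ((a - m) ^ 2 / c - 2 * (a - m) / c ^ 2 + 2 / c ^ 3) * Real.exp (a * c) := by
  have key : ∀ z : ℝ,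
      HasDerivAt (fun z => ((z - m) ^ 2 / c - 2 * (z - m) / c ^ 2 + 2 / c ^ 3) * Real.exp (z * c))
      ((z - m) ^ 2 * Real.exp (z * c)) z := by
    intro z
    have he : HasDerivAt (fun z : ℝ => Real.exp (z * c)) (c * Real.exp (z * c)) z := by
      have := ((Real.hasDerivAt_exp (z*c)).comp z ((hasDerivAt_id z).mul_const c))
      simpa [mul_comm, Function.comp_def] using this
    have hp : HasDerivAt (fun z : ℝ => (z - m) ^ 2 / c - 2 * (z - m) / c ^ 2 + 2 / c ^ 3)
        (2 * (z - m) / c - 2 / c ^ 2) z := by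
      have h1 : HasDerivAt (fun z : ℝ => (z - m) ^ 2) (2 * (z - m)) z := by
        simpa [Pi.pow_def] using ((hasDerivAt_id z).sub_const m).pow 2
      have := ((h1.div_const c).sub (((((hasDerivAt_id z).sub_const m).const_mul 2).div_const (c^2)))).add_const (2 / c ^ 3)
      simpa using this
    have : HasDerivAt (fun z => ((z - m) ^ 2 / c - 2 * (z - m) / c ^ 2 + 2 / c ^ 3) * Real.exp (z * c)) _ z := hp.mul he
    convert this using 1
    field_simp
    ring
  rw [intervalIntegral.integral_eq_sub_of_hasDerivAt (fun z _ => key z)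
    ((((continuous_id.sub continuous_const).pow 2).mul
      (Real.continuous_exp.comp (continuous_id.mul continuous_const))).intervalIntegrable a b)]

/-- Second moment of `ζ − m_{ζ,β}` under the tilt `e^{ζ/(β/2)} = e^{2ζ/β}` of the
uniform distribution on `[−τ,τ]`, where `m_{ζ,β}` is the mean under the tilt
`e^{ζ/β}`: it equals `β²/2 − β·τ·csch(2τ/β)`. -/
theorem stmt_7 (β τ : ℝ) (hβ : 0 < β) (hτ : 0 < τ) :
    (((1 / (2 * τ)) * ∫ z in (-τ)..τ,
        (z - ((1 / (2 * τ)) * ∫ w in (-τ)..τ, w * Real.exp (w / β)) /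
              ((1 / (2 * τ)) * ∫ w in (-τ)..τ, Real.exp (w / β))) ^ 2 *
          Real.exp (2 * z / β)) /
        ((1 / (2 * τ)) * ∫ z in (-τ)..τ, Real.exp (2 * z / β)))
      = β ^ 2 / 2 - β * τ / Real.sinh (2 * τ / β) := by
  have hβ' : β ≠ 0 := ne_of_gt hβ
  have hc1 : (β⁻¹ : ℝ) ≠ 0 := inv_ne_zero hβ'
  have hc2 : (2 / β : ℝ) ≠ 0 := by positivity
  have hd1 : ∀ w : ℝ, w / β = w * β⁻¹ := fun w => div_eq_mul_inv w β
  have hd2 : ∀ z : ℝ, 2 * z * β⁻¹ = z * (2 / β) := fun z => by ring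
  simp_rw [hd1, hd2]
  rw [int_xexp β⁻¹ (-τ) τ hc1, int_exp β⁻¹ (-τ) τ hc1, int_exp (2/β) (-τ) τ hc2,
    int_sqexp (2/β) _ (-τ) τ hc2]
  have e1 : τ * β⁻¹ = τ / β := (div_eq_mul_inv τ β).symm
  have e2 : -τ * β⁻¹ = -(τ / β) := by rw [div_eq_mul_inv]; ring
  have e3 : τ * (2 / β) = 2 * (τ / β) := by ring
  have e4 : -τ * (2 / β) = -(2 * (τ / β)) := by ring
  have e5 : 2 * τ * β⁻¹ = 2 * (τ / β) := by rw [div_eq_mul_inv]; ring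
  rw [e1, e2, e3, e4, Real.sinh_eq]
  set x := τ / β with hx
  have hx0 : 0 < x := div_pos hτ hβ
  have h2x : Real.exp (2 * x) = Real.exp x ^ 2 := by rw [two_mul, Real.exp_add, sq]
  rw [Real.exp_neg, Real.exp_neg (2*x), h2x]
  set u := Real.exp x with hu
  have hu1 : 1 < u := by rw [hu]; exact Real.one_lt_exp_iff.mpr hx0
  have hu0 : u ≠ 0 := ne_of_gt (lt_trans one_pos hu1)
  have hτ' : τ ≠ 0 := ne_of_gt hτ
  have hq1 : u ^ 2 - 1 ≠ 0 := by nlinarith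
  have hq2 : u ^ 4 - 1 ≠ 0 := by
    have : 1 < u ^ 4 := one_lt_pow₀ hu1 (by norm_num)
    intro h; linarith
  have hden1 : u - u⁻¹ ≠ 0 := by
    have : u⁻¹ < 1 := inv_lt_one_of_one_lt₀ hu1
    intro h; nlinarith
  have hden2 : u ^ 2 - (u ^ 2)⁻¹ ≠ 0 := by
    have h2 : 1 < u ^ 2 := one_lt_pow₀ hu1 two_ne_zero
    have : (u ^ 2)⁻¹ < 1 := inv_lt_one_of_one_lt₀ h2
    intro h; nlinarith
  have hq1' : u * u - 1 ≠ 0 := by rw [← sq]; exact hq1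
  have hq2' : u ^ 2 * u ^ 2 - 1 ≠ 0 := by rw [← pow_add]; exact hq2
  field_simp
  ring
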